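/- arXiv:2406.19718 — 3 statements merged into one kernel-verified Lean document; each statement's English description precedes it below -/
import Mathlib

section
/- For every μ > 0 and every t ≥ 0, t · tanh(t/μ) ≥ t - 0.2785 μ. -/
/-!
With `x = t / μ`, the claim reads `μ · x (1 - tanh x) ≤ 0.2785 μ`, and
`1 - tanh x = 2 / (exp (2x) + 1)`, so it suffices that `y ≤ 0.2785 (exp y + 1)` for every real `y`.
For `y ≤ 0.7` this follows from `exp y ≥ 1 + y`; beyond, from the tangent line of `exp` at `1.2785`,
which is close to the minimiser `log (1 / 0.2785)` of `0.2785 (exp y + 1) - y`.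
-/

open Real

lemma exp_1_2785_ge : (3.5911 : ℝ) ≤ exp 1.2785 := by
  have h := sum_le_exp_of_nonneg (x := 1.2785) (by norm_num) 9
  norm_num [Finset.sum_range_succ, Nat.factorial] at h
  linarith

lemma le_mul_exp_add_one (y : ℝ) : y ≤ 0.2785 * (exp y + 1) := by
  rcases le_or_gt y 0.7 with hy | hy
  · nlinarith [add_one_le_exp y]
  · have tangent : exp 1.2785 * (y - 0.2785) ≤ exp y := by
      calc exp 1.2785 * (y - 0.2785) = exp 1.2785 * (y - 1.2785 + 1) := by ring
        _ ≤ exp 1.2785 * exp (y - 1.2785) := by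
          gcongr; linarith [add_one_le_exp (y - 1.2785)]
        _ = exp y := by rw [← exp_add]; ring_nf
    nlinarith [exp_1_2785_ge]

lemma one_sub_tanh_eq (x : ℝ) : 1 - tanh x = 2 / (exp (2 * x) + 1) := by
  have hexp : exp (2 * x) = exp x * exp x := by rw [← exp_add]; ring_nf
  rw [tanh_eq_sinh_div_cosh, sinh_eq, cosh_eq, exp_neg, hexp]
  field_simp
  ring

lemma mul_one_sub_tanh_le (x : ℝ) : x * (1 - tanh x) ≤ 0.2785 := by
  rw [one_sub_tanh_eq, mul_div_assoc', div_le_iff₀ (by positivity)]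
  linarith [le_mul_exp_add_one (2 * x)]

theorem stmt_2_general (μ t : ℝ) (hμ : 0 < μ) :
    t * Real.tanh (t / μ) ≥ t - 0.2785 * μ := by
  have hdefect : t - t * tanh (t / μ) = μ * (t / μ * (1 - tanh (t / μ))) := by
    field_simp
  have := mul_le_mul_of_nonneg_left (mul_one_sub_tanh_le (t / μ)) hμ.le
  linarith

theorem stmt_2 (μ t : ℝ) (hμ : 0 < μ) (ht : 0 ≤ t) :
    t * Real.tanh (t / μ) ≥ t - 0.2785 * μ :=
  stmt_2_general μ t hμ
end

section
/- The function g(x) = x · tanh(x) - x + 0.2785 is nonnegative on [0, ∞). -/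
open Real

lemma exp_12785_ge : (3.5912 : ℝ) ≤ Real.exp 1.2785 := by
  have h1 : Real.exp 1.2785 = Real.exp 1 * Real.exp 0.2785 := by
    rw [← Real.exp_add]; norm_num
  have h2 : (2.7182818283 : ℝ) < Real.exp 1 := Real.exp_one_gt_d9
  have h3 : (1.32113 : ℝ) ≤ Real.exp 0.2785 := by
    have := Real.sum_le_exp_of_nonneg (x := 0.2785) (by norm_num) 5
    simp [Finset.sum_range_succ, Nat.factorial] at this
    norm_num at this ⊢
    linarith
  rw [h1]
  nlinarith [Real.exp_pos (0.2785 : ℝ)]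

lemma key (t : ℝ) : t ≤ 0.2785 * (Real.exp t + 1) := by
  have hcpos : (0:ℝ) < 0.2785 := by norm_num
  set a : ℝ := Real.log (1/0.2785) with ha
  have hea : Real.exp a = 1/0.2785 := Real.exp_log (by norm_num)
  have hale : a ≤ 1.2785 := by
    have h1 : Real.exp a ≤ Real.exp 1.2785 := by
      rw [hea]; linarith [exp_12785_ge]
    exact (Real.exp_le_exp).mp h1
  have htan : Real.exp a * (t - a + 1) ≤ Real.exp t := by
    have h := Real.add_one_le_exp (t - a)
    have h2 := mul_le_mul_of_nonneg_left h (Real.exp_pos a).le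
    calc Real.exp a * (t - a + 1) ≤ Real.exp a * Real.exp (t - a) := h2
      _ = Real.exp t := by rw [← Real.exp_add]; ring_nf
  rw [hea] at htan
  nlinarith

theorem stmt_4 (x : ℝ) (hx : 0 ≤ x) :
    0 ≤ x * Real.tanh x - x + 0.2785 := by
  have hk := key (2 * x)
  have hex := Real.exp_pos x
  have hexn := Real.exp_pos (-x)
  have hcosh : Real.cosh x = (Real.exp x + Real.exp (-x)) / 2 := Real.cosh_eq x
  have hsinh : Real.sinh x = (Real.exp x - Real.exp (-x)) / 2 := Real.sinh_eq x
  have hch : 0 < Real.cosh x := Real.cosh_pos x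
  have h2x : Real.exp (2 * x) = Real.exp x * Real.exp x := by
    rw [← Real.exp_add]; ring_nf
  have hinv : Real.exp (-x) = 1 / Real.exp x := by
    rw [Real.exp_neg]; exact (inv_eq_one_div _)
  rw [Real.tanh_eq_sinh_div_cosh]
  have key2 : 2 * x * Real.exp (-x) ≤ 0.2785 * (Real.exp x + Real.exp (-x)) := by
    rw [hinv]
    rw [h2x] at hk
    have := mul_le_mul_of_nonneg_right hk (le_of_lt (by positivity : (0:ℝ) < 1 / Real.exp x))
    calc 2 * x * (1 / Real.exp x) ≤ 0.2785 * (Real.exp x * Real.exp x + 1) * (1 / Real.exp x) := this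
      _ = 0.2785 * (Real.exp x + 1 / Real.exp x) := by field_simp
  have goal2 : 0 ≤ x * Real.sinh x - x * Real.cosh x + 0.2785 * Real.cosh x := by
    rw [hsinh, hcosh]
    nlinarith [key2]
  have : x * (Real.sinh x / Real.cosh x) - x + 0.2785
      = (x * Real.sinh x - x * Real.cosh x + 0.2785 * Real.cosh x) / Real.cosh x := by
    field_simp
  rw [this]
  positivity
end

section
/- If η: [0, ∞) → ℝ^n is differentiable with ‖η‖² integrable on [0, ∞) and ‖η'(t)‖ bounded on [0, ∞), then η(t) → 0 as t → ∞. -/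
/-!
If `‖η t‖ ≥ ε`, the derivative bound `C` keeps `‖η‖ ≥ ε / 2` on the window `[t, t + δ]` with
`C δ ≤ ε / 2`, so `‖η‖²` has integral at least `δ (ε / 2)²` there. Integrals of an integrable
function over windows of fixed length tend to zero, so this can happen only for bounded `t`.
-/

open MeasureTheory Filter Topology Set

theorem MeasureTheory.IntegrableOn.tendsto_intervalIntegral_add_atTop {E : Type*}
    [NormedAddCommGroup E] [NormedSpace ℝ E] {f : ℝ → E} {a : ℝ}
    (hf : IntegrableOn f (Ioi a)) (δ : ℝ) :
    Tendsto (fun t => ∫ s in t..t + δ, f s) atTop (𝓝 0) := by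
  have hlim (b : ℝ → ℝ) (hb : Tendsto b atTop atTop) :=
    intervalIntegral_tendsto_integral_Ioi a hf hb
  have hint : ∀ b, a ≤ b → IntervalIntegrable f volume a b := fun b hb =>
    (intervalIntegrable_iff_integrableOn_Ioc_of_le hb).2 (hf.mono_set Ioc_subset_Ioi_self)
  refine (sub_self (∫ s in Ioi a, f s) ▸
    (hlim (· + δ) (tendsto_atTop_add_const_right _ δ tendsto_id)).sub (hlim id tendsto_id)).congr' ?_
  filter_upwards [eventually_ge_atTop a, eventually_ge_atTop (a - δ)] with t ht htδ
  exact intervalIntegral.integral_interval_sub_left (hint _ (by linarith)) (hint t ht)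

theorem mul_sq_le_integral_norm_sq {E : Type*} [NormedAddCommGroup E] {g : ℝ → E}
    {a δ m : ℝ} (hδ : 0 ≤ δ) (hm : 0 ≤ m) (hg : ContinuousOn g (Icc a (a + δ)))
    (hclose : ∀ s ∈ Icc a (a + δ), ‖g s - g a‖ ≤ ‖g a‖ - m) :
    δ * m ^ 2 ≤ ∫ s in a..a + δ, ‖g s‖ ^ 2 := by
  have hle : a ≤ a + δ := le_add_of_nonneg_right hδ
  have hbound : ∀ s ∈ Icc a (a + δ), m ^ 2 ≤ ‖g s‖ ^ 2 := fun s hs => by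
    have := norm_sub_norm_le (g a) (g s)
    rw [norm_sub_rev] at this
    gcongr
    linarith [hclose s hs]
  have hcont : ContinuousOn (fun s => ‖g s‖ ^ 2) (uIcc a (a + δ)) := by
    rw [uIcc_of_le hle]; exact hg.norm.pow 2
  simpa using intervalIntegral.integral_mono_on hle (intervalIntegrable_const (μ := volume))
    hcont.intervalIntegrable hbound

open MeasureTheory in
theorem stmt_11 (n : ℕ) (η : ℝ → EuclideanSpace ℝ (Fin n))
    (hdiff : Differentiable ℝ η)
    (hint : IntegrableOn (fun t => ‖η t‖ ^ 2) (Set.Ici 0))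
    (hbd : ∃ C : ℝ, ∀ t, 0 ≤ t → ‖deriv η t‖ ≤ C) :
    Filter.Tendsto η Filter.atTop (nhds 0) := by
  obtain ⟨C, hC⟩ := hbd
  have hC0 : 0 ≤ C := (norm_nonneg _).trans (hC 0 le_rfl)
  refine Metric.tendsto_nhds.2 fun ε hε => ?_
  obtain ⟨δ, hδ, hCδ⟩ : ∃ δ > 0, C * δ ≤ ε / 2 := ⟨ε / (2 * (C + 1)), by positivity, by
    rw [mul_div_assoc', div_le_div_iff₀ (by positivity) two_pos]
    nlinarith⟩
  have hwindow := (hint.mono_set Ioi_subset_Ici_self).tendsto_intervalIntegral_add_atTop δ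
  filter_upwards [eventually_ge_atTop 0,
    hwindow.eventually (gt_mem_nhds (by positivity : 0 < δ * (ε / 2) ^ 2))] with t ht hlt
  rw [dist_zero_right]
  by_contra! hge
  refine hlt.not_ge (mul_sq_le_integral_norm_sq hδ.le (by positivity)
    hdiff.continuous.continuousOn fun s hs => ?_)
  calc ‖η s - η t‖ ≤ C * ‖s - t‖ := (convex_Ici 0).norm_image_sub_le_of_norm_deriv_le
        (fun x _ => hdiff x) hC ht (ht.trans hs.1)
    _ ≤ C * δ := by
        rw [Real.norm_of_nonneg (by linarith [hs.1])]
        gcongr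
        linarith [hs.2]
    _ ≤ ‖η t‖ - ε / 2 := by linarith
end
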